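/- In classical scheduling with work weights and barrier synchronization, the optimum can be nearly twice the optimum without synchronization: for the fully-connected layered DAG of width k and length k (unit weights) together with one isolated node of weight k, with P = k+1 processors, the optimal makespan without synchronization is k while with barrier synchronization it is 2k−1; the ratio (2k−1)/k exceeds 2−ε for any ε > 0 when k is large enough. -/

import Mathlib

/-- Node set: the `k × k` fully-connected layered DAG plus one isolated node. -/
abbrev WNode (k : ℕ) := (Fin k × Fin k) ⊕ Unit

/-- Work weights: every layered node has weight 1, the isolated node has weight `k`. -/
def wWeight (k : ℕ) : WNode k → ℕ
  | .inl _ => 1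
  | .inr _ => k

/-- Edges: every node of layer `i` to every node of layer `i+1`; the extra node is isolated. -/
def wEdge (k : ℕ) : WNode k → WNode k → Prop
  | .inl u, .inl v => (v.1 : ℕ) = (u.1 : ℕ) + 1
  | _, _ => False

/-- Validity of a weighted classical schedule with `k+1` processors: node `v` occupies the
interval `(t v, t v + w v]` on its processor, intervals on the same processor are disjoint,
and every edge `(u,v)` satisfies `t u + w u ≤ t v`. -/
def wValid (k : ℕ) (pi : WNode k → Fin (k + 1)) (t : WNode k → ℕ) : Prop :=
  (∀ u v, u ≠ v → pi u = pi v →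
    t u + wWeight k u ≤ t v ∨ t v + wWeight k v ≤ t u) ∧
  (∀ u v, wEdge k u v → t u + wWeight k u ≤ t v)

/-- Barrier synchronization: for every cross-processor edge `(u,v)` there is a time
`t0 ∈ [t u + w u, t v]` at which no processor is in the middle of computing a node. -/
def wSync (k : ℕ) (pi : WNode k → Fin (k + 1)) (t : WNode k → ℕ) : Prop :=
  ∀ u v, wEdge k u v → pi u ≠ pi v →
    ∃ t0, t u + wWeight k u ≤ t0 ∧ t0 ≤ t v ∧
      ∀ x : WNode k, ¬ (t x < t0 ∧ t0 < t x + wWeight k x)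

/-- Makespan of a weighted schedule. -/
def wMakespan (k : ℕ) (t : WNode k → ℕ) : ℕ :=
  Finset.univ.sup fun v : WNode k => t v + wWeight k v

lemma wlow_aux (k : ℕ) (pi : WNode k → Fin (k+1)) (t : WNode k → ℕ) (hv : wValid k pi t) :
    ∀ n (i j : Fin k), (i : ℕ) = n → n ≤ t (Sum.inl (i, j)) := by
  intro n
  induction n with
  | zero => intro i j _; exact Nat.zero_le _
  | succ n ih =>
    intro i j hi
    have hn : n < k := by have := i.isLt; omega
    have he := hv.2 (Sum.inl (⟨n, hn⟩, j)) (Sum.inl (i, j)) (by simp [wEdge, hi])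
    have h2 := ih ⟨n, hn⟩ j rfl
    simp [wWeight] at he
    omega

lemma wlow (k : ℕ) (pi : WNode k → Fin (k+1)) (t : WNode k → ℕ) (hv : wValid k pi t)
    (i j : Fin k) : (i : ℕ) ≤ t (Sum.inl (i, j)) :=
  wlow_aux k pi t hv i.val i j rfl

lemma wchain (k : ℕ) (pi : WNode k → Fin (k+1)) (t : WNode k → ℕ) (hv : wValid k pi t) :
    ∀ m (i j : Fin k), (i : ℕ) + m + 1 = k →
      t (Sum.inl (i, j)) + (m + 1) ≤ wMakespan k t := by
  intro m
  induction m with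
  | zero =>
    intro i j _
    have h : t (Sum.inl (i,j)) + wWeight k (Sum.inl (i,j)) ≤ wMakespan k t :=
      Finset.le_sup (f := fun v : WNode k => t v + wWeight k v) (Finset.mem_univ _)
    simpa [wWeight] using h
  | succ m ih =>
    intro i j h
    have hlt : (i : ℕ) + 1 < k := by omega
    have he := hv.2 (Sum.inl (i, j)) (Sum.inl (⟨(i:ℕ)+1, hlt⟩, j)) (by simp [wEdge])
    have h2 := ih ⟨(i:ℕ)+1, hlt⟩ j (by simp; omega)
    simp [wWeight] at he
    omega

/-- In classical scheduling with work weights, barrier synchronization can nearly double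
the optimum: for the fully-connected layered DAG of width and length `k` (unit weights)
plus one isolated node of weight `k`, with `P = k+1` processors, the optimal makespan
without synchronization is exactly `k`, while with barrier synchronization it is exactly
`2k − 1`; the ratio `(2k−1)/k` exceeds `2 − ε` for any `ε > 0` once `k` is large enough. -/
theorem barrier_sync_nearly_doubles_weighted_optimum (k : ℕ) (hk : 0 < k) :
    (∃ (pi : WNode k → Fin (k + 1)) (t : WNode k → ℕ),
      wValid k pi t ∧ wMakespan k t ≤ k) ∧
    (∀ (pi : WNode k → Fin (k + 1)) (t : WNode k → ℕ),
      wValid k pi t → k ≤ wMakespan k t) ∧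
    (∃ (pi : WNode k → Fin (k + 1)) (t : WNode k → ℕ),
      wValid k pi t ∧ wSync k pi t ∧ wMakespan k t ≤ 2 * k - 1) ∧
    (∀ (pi : WNode k → Fin (k + 1)) (t : WNode k → ℕ),
      wValid k pi t → wSync k pi t → 2 * k - 1 ≤ wMakespan k t) ∧
    (∀ ε : ℝ, 0 < ε → ∃ k0 : ℕ, ∀ k' : ℕ, k0 ≤ k' →
      (2 : ℝ) - ε < ((2 * k' - 1 : ℕ) : ℝ) / (k' : ℝ)) := by
  refine ⟨?_, ?_, ?_, ?_, ?_⟩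
  · -- no sync, makespan ≤ k
    refine ⟨fun v => match v with
      | .inl p => Fin.castSucc p.2
      | .inr _ => Fin.last k,
      fun v => match v with
      | .inl p => (p.1 : ℕ)
      | .inr _ => 0, ⟨?_, ?_⟩, ?_⟩
    · rintro (⟨i, j⟩ | ⟨⟩) (⟨i', j'⟩ | ⟨⟩) hne hpi
      · have hj : j = j' := Fin.castSucc_injective _ hpi
        subst hj
        have hi : (i : ℕ) ≠ (i' : ℕ) := by
          intro h; exact hne (by simp [Fin.val_injective h])
        simp only [wWeight]; omega
      · exact absurd (congrArg Fin.val hpi) (by simp; omega)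
      · exact absurd (congrArg Fin.val hpi) (by simp; omega)
      · exact absurd rfl hne
    · rintro (⟨i, j⟩ | ⟨⟩) (⟨i', j'⟩ | ⟨⟩) he <;> simp [wEdge] at he
      simp only [wWeight]; omega
    · refine Finset.sup_le ?_
      rintro (⟨i, j⟩ | ⟨⟩) _ <;> simp only [wWeight]
      · have := i.isLt; omega
      · omega
  · -- lower bound k always
    intro pi t hv
    have h : t (Sum.inr ()) + wWeight k (Sum.inr ()) ≤ wMakespan k t :=
      Finset.le_sup (f := fun v : WNode k => t v + wWeight k v) (Finset.mem_univ _)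
    simp only [wWeight] at h; omega
  · -- with sync, makespan ≤ 2k - 1
    refine ⟨fun v => match v with
      | .inl p => Fin.castSucc p.2
      | .inr _ => Fin.last k,
      fun v => match v with
      | .inl p => (p.1 : ℕ)
      | .inr _ => k - 1, ⟨?_, ?_⟩, ?_, ?_⟩
    · rintro (⟨i, j⟩ | ⟨⟩) (⟨i', j'⟩ | ⟨⟩) hne hpi
      · have hj : j = j' := Fin.castSucc_injective _ hpi
        subst hj
        have hi : (i : ℕ) ≠ (i' : ℕ) := by
          intro h; exact hne (by simp [Fin.val_injective h])
        simp only [wWeight]; omega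
      · exact absurd (congrArg Fin.val hpi) (by simp; omega)
      · exact absurd (congrArg Fin.val hpi) (by simp; omega)
      · exact absurd rfl hne
    · rintro (⟨i, j⟩ | ⟨⟩) (⟨i', j'⟩ | ⟨⟩) he <;> simp [wEdge] at he
      simp only [wWeight]; omega
    · rintro (⟨i, j⟩ | ⟨⟩) (⟨i', j'⟩ | ⟨⟩) he hpi <;> simp [wEdge] at he
      refine ⟨(i : ℕ) + 1, by simp [wWeight], by simp [he], ?_⟩
      rintro (⟨a, b⟩ | ⟨⟩) <;> simp only [wWeight]
      · omega
      · have := i'.isLt; omega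
    · refine Finset.sup_le ?_
      rintro (⟨i, j⟩ | ⟨⟩) _ <;> simp only [wWeight]
      · have := i.isLt; omega
      · omega
  · -- with sync, lower bound 2k - 1
    intro pi t hv hs
    have hinr : t (Sum.inr ()) + k ≤ wMakespan k t := by
      have h : t (Sum.inr ()) + wWeight k (Sum.inr ()) ≤ wMakespan k t :=
        Finset.le_sup (f := fun v : WNode k => t v + wWeight k v) (Finset.mem_univ _)
      simpa [wWeight] using h
    set s := t (Sum.inr ()) with hsdef
    by_cases hcase : k - 1 ≤ s
    · omega
    · have hs2 : s + 2 ≤ k := by omega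
      set a : Fin k := ⟨s, by omega⟩ with ha
      set b : Fin k := ⟨s + 1, by omega⟩ with hb
      by_cases hcross : ∃ j j' : Fin k, pi (Sum.inl (a, j)) ≠ pi (Sum.inl (b, j'))
      · obtain ⟨j, j', hne⟩ := hcross
        obtain ⟨t0, h1, h2, h3⟩ := hs (Sum.inl (a, j)) (Sum.inl (b, j'))
          (by simp [wEdge]; rfl) hne
        have hu := wlow k pi t hv a j
        have hx := h3 (Sum.inr ())
        simp only [wWeight] at h1 hx
        have hav : (a : ℕ) = s := rfl
        have ht0 : s + k ≤ t0 := by omega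
        have htv : s + k ≤ t (Sum.inl (b, j')) := le_trans ht0 h2
        have hm := wchain k pi t hv (k - s - 2) b j' (by simp [hb]; omega)
        omega
      · push_neg at hcross
        set f : Fin k × Bool → WNode k :=
          fun p => Sum.inl (if p.2 then b else a, p.1) with hf
        have hab : a ≠ b := by
          intro h
          have h' := congrArg Fin.val h
          simp only [ha, hb] at h'
          omega
        have finj : Function.Injective f := by
          rintro ⟨pj, pb⟩ ⟨qj, qb⟩ h
          simp only [hf, Sum.inl.injEq, Prod.mk.injEq] at h
          obtain ⟨h1, h2⟩ := h
          cases pb <;> cases qb <;> simp only at h1 <;>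
            first
              | (exact absurd h1.symm hab)
              | (exact absurd h1 hab)
              | (subst h2; rfl)
        have hpic : ∀ p, pi (f p) = pi (Sum.inl (b, ⟨0, hk⟩)) := by
          rintro ⟨j, bb⟩
          cases bb
          · exact hcross j ⟨0, hk⟩
          · exact (hcross ⟨0, hk⟩ j).symm.trans (hcross ⟨0, hk⟩ ⟨0, hk⟩)
        have ginj : Function.Injective (fun p => t (f p)) := by
          intro p q hpq
          by_contra hne
          have hfne : f p ≠ f q := fun h => hne (finj h)
          have hd := hv.1 (f p) (f q) hfne ((hpic p).trans (hpic q).symm)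
          have hw : ∀ r, wWeight k (f r) = 1 := by
            rintro ⟨rj, rb⟩; cases rb <;> rfl
          rw [hw p, hw q] at hd
          simp only at hpq
          omega
        have hcard : (Finset.image (fun p => t (f p)) Finset.univ).card = k * 2 := by
          rw [Finset.card_image_of_injective _ ginj]
          simp
        have hsub : ¬ (Finset.image (fun p => t (f p)) Finset.univ ⊆
            Finset.range (2 * k - 1)) := by
          intro h
          have := Finset.card_le_card h
          rw [hcard, Finset.card_range] at this
          omega
        obtain ⟨x, hxS, hxn⟩ := Finset.not_subset.mp hsub
        obtain ⟨p, -, hpx⟩ := Finset.mem_image.mp hxS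
        rw [Finset.mem_range, not_lt] at hxn
        have hms : t (f p) + wWeight k (f p) ≤ wMakespan k t :=
          Finset.le_sup (f := fun v : WNode k => t v + wWeight k v) (Finset.mem_univ _)
        have hw : wWeight k (f p) = 1 := by
          rcases p with ⟨rj, rb⟩; cases rb <;> rfl
        omega
  · -- real limit
    intro ε hε
    refine ⟨⌈1 / ε⌉₊ + 1, fun k' hk' => ?_⟩
    have hk1 : 1 ≤ k' := by omega
    have hkpos : (0 : ℝ) < (k' : ℝ) := by exact_mod_cast Nat.pos_of_ne_zero (by omega)
    have hcast : ((2 * k' - 1 : ℕ) : ℝ) = 2 * (k' : ℝ) - 1 := by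
      have : 1 ≤ 2 * k' := by omega
      push_cast [Nat.cast_sub this]
      ring
    rw [hcast, lt_div_iff₀ hkpos]
    have hceil : (1 / ε : ℝ) ≤ (⌈1 / ε⌉₊ : ℕ) := Nat.le_ceil _
    have hle : ((⌈1 / ε⌉₊ + 1 : ℕ) : ℝ) ≤ (k' : ℝ) := by exact_mod_cast hk'
    have h1 : 1 / ε < (k' : ℝ) := by push_cast at hle; linarith
    have h2 : 1 < (k' : ℝ) * ε := (div_lt_iff₀ hε).mp h1
    nlinarith
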